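/- Let p be an odd prime, let R be the quotient ring (ℤ/pℤ)[X]/(X² − X − 1) (e.g., AdjoinRoot of the polynomial X² − X − 1 over ℤ/pℤ) and let r ∈ R denote the image of X. Then for every integer n, the matrix (A₂ mod p)^n is the identity matrix over ℤ/pℤ if and only if r^(2n) = 1 in R. (Here r² = r + 1 is the image of the fundamental unit (3+√5)/2 = ((1+√5)/2)² of ℤ[(1+√5)/2] reduced mod p.) -/

import Mathlib

/-!
`A₂` fixes the trivial colorings `(1, 1, 1)` and preserves the span of `(1, 1, 0)` and `(0, 1, 1)`,
acting there by `[[1, 1], [1, 2]]`, which is the matrix of multiplication by `r² = r + 1` on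
`R = K[X]/(X² - X - 1)` in the basis `1, r`. Hence `1 ⊕ (left multiplication)`, conjugated by this
change of basis, is an injective group homomorphism `Rˣ → GL₃(K)` sending `r²` to `A₂`; being a
homomorphism, it turns `r ^ (2n) = 1` into `A₂ ^ n = 1` and back, for every integer `n`.
-/

open Polynomial

/-- The coloring matrix `A_{σ₁σ₂⁻¹}` of the 3-braid `σ₁σ₂⁻¹`, reduced modulo `p`. -/
def A₂modp (p : ℕ) : Matrix (Fin 3) (Fin 3) (ZMod p) := !![0, 1, 0; -2, 4, -1; -1, 2, 0]

open AdjoinRoot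

section GoldenRing

variable (K : Type*) [CommRing K]

noncomputable abbrev goldenPoly : K[X] := X ^ 2 - X - 1

theorem goldenPoly_monic : (goldenPoly K).Monic := by
  unfold goldenPoly
  monicity!

theorem goldenPoly_natDegree [Nontrivial K] : (goldenPoly K).natDegree = 2 := by
  unfold goldenPoly
  compute_degree!

theorem root_goldenPoly_sq : root (goldenPoly K) ^ 2 = root (goldenPoly K) + 1 := by
  have h := eval₂_root (goldenPoly K)
  simp only [goldenPoly, eval₂_sub, eval₂_pow, eval₂_X, eval₂_one] at h
  linear_combination h

variable [Nontrivial K]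

noncomputable def goldenBasis : Module.Basis (Fin 2) K (AdjoinRoot (goldenPoly K)) :=
  (powerBasis' (goldenPoly_monic K)).basis.reindex (finCongr (goldenPoly_natDegree K))

variable {K}

theorem goldenBasis_apply (i : Fin 2) : goldenBasis K i = root (goldenPoly K) ^ (i : ℕ) := by
  rw [goldenBasis, Module.Basis.reindex_apply, PowerBasis.basis_eq_pow]
  rfl

theorem leftMulMatrix_goldenBasis_root :
    Algebra.leftMulMatrix (goldenBasis K) (root (goldenPoly K)) = !![0, 1; 1, 1] := by
  set b := goldenBasis K
  have hb0 : b 0 = 1 := by simp [b, goldenBasis_apply]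
  have hb1 : b 1 = root (goldenPoly K) := by simp [b, goldenBasis_apply]
  have hmul_b0 : root (goldenPoly K) * b 0 = b 1 := by rw [hb0, hb1, mul_one]
  have hmul_b1 : root (goldenPoly K) * b 1 = b 0 + b 1 := by
    rw [hb0, hb1, ← sq, root_goldenPoly_sq, add_comm]
  ext i j
  fin_cases i <;> fin_cases j <;>
    simp [Algebra.leftMulMatrix_eq_repr_mul, hmul_b0, hmul_b1]

end GoldenRing

section BlockDiagOne

variable {K : Type*} [Semiring K]

def blockDiagOne : Matrix (Fin 2) (Fin 2) K →* Matrix (Fin 3) (Fin 3) K where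
  toFun N := !![1, 0, 0; 0, N 0 0, N 0 1; 0, N 1 0, N 1 1]
  map_one' := by
    ext i j
    fin_cases i <;> fin_cases j <;> rfl
  map_mul' M N := by
    ext i j
    fin_cases i <;> fin_cases j <;> simp [Matrix.mul_apply, Fin.sum_univ_succ]

theorem blockDiagOne_injective : Function.Injective (blockDiagOne (K := K)) := by
  intro M N h
  ext i j
  have hij := congrFun (congrFun h i.succ) j.succ
  fin_cases i <;> fin_cases j <;> simpa [blockDiagOne] using hij

end BlockDiagOne

section ColoringRep

variable {K : Type*} [CommRing K]

variable (K) in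
def coloringBasisChange : (Matrix (Fin 3) (Fin 3) K)ˣ where
  val := !![1, 1, 0; 1, 1, 1; 1, 0, 1]
  inv := !![1, -1, 1; 0, 1, -1; -1, 1, 0]
  val_inv := by rw [Matrix.mul_fin_three, Matrix.one_fin_three]; norm_num
  inv_val := by rw [Matrix.mul_fin_three, Matrix.one_fin_three]; norm_num

theorem coloringBasisChange_conj_blockDiagOne :
    (coloringBasisChange K : Matrix (Fin 3) (Fin 3) K) * blockDiagOne !![1, 1; 1, 2] *
      (↑(coloringBasisChange K)⁻¹ : Matrix (Fin 3) (Fin 3) K) =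
      !![0, 1, 0; -2, 4, -1; -1, 2, 0] := by
  norm_num [coloringBasisChange, blockDiagOne, Matrix.mul_fin_three]

variable [Nontrivial K]

noncomputable def coloringRep : (AdjoinRoot (goldenPoly K))ˣ →* (Matrix (Fin 3) (Fin 3) K)ˣ :=
  (MulAut.conj (coloringBasisChange K)).toMonoidHom.comp
    (Units.map (blockDiagOne.comp
      (Algebra.leftMulMatrix (goldenBasis K) : AdjoinRoot (goldenPoly K) →* _)))

theorem coloringRep_injective : Function.Injective (coloringRep (K := K)) :=
  (MulAut.conj (coloringBasisChange K)).injective.comp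
    (Units.map_injective (blockDiagOne_injective.comp (Algebra.leftMulMatrix_injective _)))

theorem val_coloringRep_sq {u : (AdjoinRoot (goldenPoly K))ˣ}
    (hu : (u : AdjoinRoot (goldenPoly K)) = root (goldenPoly K)) :
    (coloringRep (u ^ 2) : Matrix (Fin 3) (Fin 3) K) = !![0, 1, 0; -2, 4, -1; -1, 2, 0] := by
  have hsq : (!![0, 1; 1, 1] ^ 2 : Matrix (Fin 2) (Fin 2) K) = !![1, 1; 1, 2] := by
    rw [sq, Matrix.mul_fin_two]
    norm_num
  simp only [coloringRep, MonoidHom.comp_apply, MulEquiv.coe_toMonoidHom, MulAut.conj_apply,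
    Units.val_mul, Units.coe_map, Units.val_pow_eq_pow_val, hu, MonoidHom.coe_coe, map_pow,
    leftMulMatrix_goldenBasis_root]
  rw [Units.conj_pow, ← map_pow, hsq, coloringBasisChange_conj_blockDiagOne]

end ColoringRep

theorem A₂modp_zpow_eq_one_iff_general (p : ℕ) (hp : p.Prime)
    (u : (AdjoinRoot ((X : Polynomial (ZMod p)) ^ 2 - X - 1))ˣ)
    (hu : (u : AdjoinRoot ((X : Polynomial (ZMod p)) ^ 2 - X - 1)) =
      AdjoinRoot.root ((X : Polynomial (ZMod p)) ^ 2 - X - 1))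
    (n : ℤ) :
    (A₂modp p) ^ n = 1 ↔ u ^ (2 * n) = 1 := by
  have : Fact (1 < p) := ⟨hp.one_lt⟩
  rw [A₂modp, ← val_coloringRep_sq hu, ← Matrix.coe_units_zpow, Units.val_eq_one, ← map_zpow,
    map_eq_one_iff _ coloringRep_injective, zpow_mul]
  norm_cast

/-- For an odd prime `p`, let `R = (ℤ/pℤ)[X]/(X² - X - 1)` and let `r` be the image
of `X` (a unit of `R`, presented here as a unit `u` with underlying element `r`).
Then for every integer `n`, `(A₂ mod p) ^ n = 1` iff `r ^ (2n) = 1` in `R`. -/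
theorem A₂modp_zpow_eq_one_iff (p : ℕ) (hp : p.Prime) (hodd : Odd p)
    (u : (AdjoinRoot ((X : Polynomial (ZMod p)) ^ 2 - X - 1))ˣ)
    (hu : (u : AdjoinRoot ((X : Polynomial (ZMod p)) ^ 2 - X - 1)) =
      AdjoinRoot.root ((X : Polynomial (ZMod p)) ^ 2 - X - 1))
    (n : ℤ) :
    (A₂modp p) ^ n = 1 ↔ u ^ (2 * n) = 1 :=
  A₂modp_zpow_eq_one_iff_general p hp u hu n
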